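/- arXiv:1503.08854 — 5 statements merged into one kernel-verified Lean document; each statement's English description precedes it below -/
import Mathlib

section
/- For any real number α with 2/n ≤ α ≤ 1, the unit sphere B of the l¹ norm in ℝⁿ admits an α-net in the l^∞ norm of size at most exp(2 α⁻¹ log n). -/
open Finset

/-- A single signed-basis step (or zero step). -/
def stp (n : ℕ) (o : Option (Fin n × Bool)) (i : Fin n) : ℝ :=
  match o with
  | none => 0
  | some (i', b) => if i' = i then (if b then 1 else -1) else 0

lemma cover (n : ℕ) (α : ℝ) (hα : 0 < α) :
    ∀ (M : ℕ) (x : Fin n → ℝ), (∑ i, |x i|) ≤ α * (M + 1) →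
    ∃ w : Fin M → Option (Fin n × Bool),
      ∀ i, |x i - α * ∑ j, stp n (w j) i| ≤ α := by
  intro M
  induction M with
  | zero =>
    intro x hx
    refine ⟨fun j => none, fun i => ?_⟩
    simp only [stp, Finset.univ_eq_empty, Finset.sum_empty, mul_zero, sub_zero]
    have h1 : |x i| ≤ ∑ i', |x i'| :=
      Finset.single_le_sum (f := fun i' => |x i'|) (fun _ _ => abs_nonneg _) (mem_univ i)
    have h2 := hx
    push_cast at h2
    linarith
  | succ M ih =>
    intro x hx
    by_cases hsmall : ∀ i, |x i| ≤ α
    · refine ⟨fun j => none, fun i => ?_⟩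
      simpa [stp] using hsmall i
    · push_neg at hsmall
      obtain ⟨i₀, hi₀⟩ := hsmall
      set sgn : ℝ := if 0 ≤ x i₀ then 1 else -1 with hsgn
      set x' : Fin n → ℝ := Function.update x i₀ (x i₀ - α * sgn) with hx'
      have habs : |x i₀ - α * sgn| = |x i₀| - α := by
        rcases le_or_gt 0 (x i₀) with h | h
        · have : sgn = 1 := if_pos h
          rw [this, abs_of_nonneg h] at *
          rw [abs_of_nonneg (by linarith : (0:ℝ) ≤ x i₀ - α * 1)]
          ring
        · have : sgn = -1 := if_neg (not_le.mpr h)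
          rw [this, abs_of_neg h] at *
          rw [abs_of_neg (by linarith : x i₀ - α * (-1) < 0)]
          ring
      have hsum' : (∑ i, |x' i|) ≤ α * (M + 1) := by
        have key : ∀ f : Fin n → ℝ, ∑ i, f i = f i₀ + ∑ i ∈ Finset.univ.erase i₀, f i :=
          fun f => (Finset.add_sum_erase Finset.univ f (mem_univ i₀)).symm
        have e1 : ∑ i ∈ Finset.univ.erase i₀, |x' i| = ∑ i ∈ Finset.univ.erase i₀, |x i| := by
          apply Finset.sum_congr rfl
          intro i hi
          rw [hx', Function.update_of_ne (Finset.ne_of_mem_erase hi)]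
        have h1 : (∑ i, |x' i|) = (∑ i, |x i|) - α := by
          rw [key (fun i => |x' i|), key (fun i => |x i|)]
          rw [e1]
          simp only [hx', Function.update_self, habs]
          ring
        rw [h1]
        push_cast at hx ⊢
        linarith
      obtain ⟨w', hw'⟩ := ih x' hsum'
      refine ⟨Fin.cases (some (i₀, decide (0 ≤ x i₀))) w', fun i => ?_⟩
      rw [Fin.sum_univ_succ]
      simp only [Fin.cases_zero, Fin.cases_succ]
      have hstep : x i - α * stp n (some (i₀, decide (0 ≤ x i₀))) i = x' i := by
        by_cases h : i = i₀
        · subst h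
          simp only [stp, if_pos rfl, hx', Function.update_self]
          by_cases h0 : 0 ≤ x i
          · simp [h0, hsgn]
          · simp [h0, hsgn]
        · have h' : i₀ ≠ i := fun hh => h hh.symm
          simp [stp, h', hx', Function.update_of_ne h]
      calc |x i - α * (stp n (some (i₀, decide (0 ≤ x i₀))) i + ∑ j, stp n (w' j) i)|
          = |x' i - α * ∑ j, stp n (w' j) i| := by rw [← hstep]; ring_nf
        _ ≤ α := hw' i

/-- For any real α with 2/n ≤ α ≤ 1 (n ≥ 2), the unit sphere of the l¹ norm in ℝⁿ
admits an α-net in the l^∞ norm of size at most exp(2 α⁻¹ log n). -/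
theorem stmt0 (n : ℕ) (hn : 2 ≤ n) (α : ℝ) (hα1 : 2 / n ≤ α) (hα2 : α ≤ 1) :
    ∃ N : Finset (Fin n → ℝ),
      (∀ x : Fin n → ℝ, ∑ i, |x i| = 1 →
        ∃ y ∈ N, ∀ i, |x i - y i| ≤ α) ∧
      (N.card : ℝ) ≤ Real.exp (2 * α⁻¹ * Real.log n) := by
  have hn0 : (0:ℝ) < n := by positivity
  have hα0 : 0 < α := lt_of_lt_of_le (by positivity) hα1
  rcases eq_or_lt_of_le hα2 with h1 | h1
  · -- α = 1 : the net {0} works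
    subst h1
    refine ⟨{0}, fun x hx => ⟨0, Finset.mem_singleton_self 0, fun i => ?_⟩, ?_⟩
    · have : |x i| ≤ ∑ i', |x i'| :=
        Finset.single_le_sum (f := fun i' => |x i'|) (fun _ _ => abs_nonneg _) (mem_univ i)
      simpa [hx] using this
    · rw [Finset.card_singleton]
      have hlog : 0 ≤ Real.log n := Real.log_nonneg (by exact_mod_cast Nat.one_le_of_lt hn)
      have : (0:ℝ) ≤ 2 * (1:ℝ)⁻¹ * Real.log n := by positivity
      simpa using Real.one_le_exp this
  · -- α < 1, hence n ≥ 3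
    have hn3 : 3 ≤ n := by
      by_contra h
      interval_cases n
      · simp at hα1; linarith
    set M : ℕ := ⌊α⁻¹⌋₊ with hM
    set F : (Fin M → Option (Fin n × Bool)) → (Fin n → ℝ) :=
      fun w i => α * ∑ j, stp n (w j) i with hF
    refine ⟨Finset.image F Finset.univ, ?_, ?_⟩
    · intro x hx
      have hpre : (∑ i, |x i|) ≤ α * (M + 1) := by
        have h2 : α⁻¹ < M + 1 := Nat.lt_floor_add_one _
        have h3 : α * α⁻¹ < α * (M + 1) := by
          exact mul_lt_mul_of_pos_left h2 hα0
        rw [mul_inv_cancel₀ (ne_of_gt hα0)] at h3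
        linarith [hx.le, hx.ge]
      obtain ⟨w, hw⟩ := cover n α hα0 M x hpre
      exact ⟨F w, Finset.mem_image_of_mem F (mem_univ w), hw⟩
    · have hcard : (Finset.image F Finset.univ).card ≤ (2 * n + 1) ^ M := by
        calc (Finset.image F Finset.univ).card ≤ (Finset.univ : Finset (Fin M → Option (Fin n × Bool))).card :=
              Finset.card_image_le
          _ = (2 * n + 1) ^ M := by
              simp [Finset.card_univ, Fintype.card_option, Fintype.card_prod]
              ring
      have step1 : ((Finset.image F Finset.univ).card : ℝ) ≤ ((2 * n + 1 : ℕ) : ℝ) ^ M := by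
        exact_mod_cast hcard
      have step2 : ((2 * n + 1 : ℕ) : ℝ) ^ M ≤ ((n : ℝ) ^ 2) ^ M := by
        apply pow_le_pow_left₀ (by positivity)
        have : (3:ℝ) ≤ n := by exact_mod_cast hn3
        push_cast
        nlinarith
      have step3 : ((n : ℝ) ^ 2) ^ M = (n : ℝ) ^ ((2 * M : ℕ) : ℝ) := by
        rw [Real.rpow_natCast, ← pow_mul]
      have step4 : (n : ℝ) ^ ((2 * M : ℕ) : ℝ) ≤ (n : ℝ) ^ (2 * α⁻¹) := by
        apply Real.rpow_le_rpow_of_exponent_le (by exact_mod_cast Nat.one_le_of_lt hn)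
        have hfl : (M : ℝ) ≤ α⁻¹ := Nat.floor_le (by positivity)
        push_cast
        linarith
      have step5 : (n : ℝ) ^ (2 * α⁻¹) = Real.exp (2 * α⁻¹ * Real.log n) := by
        rw [Real.rpow_def_of_pos hn0, mul_comm]
      calc ((Finset.image F Finset.univ).card : ℝ) ≤ ((2 * n + 1 : ℕ) : ℝ) ^ M := step1
        _ ≤ ((n : ℝ) ^ 2) ^ M := step2
        _ = (n : ℝ) ^ ((2 * M : ℕ) : ℝ) := step3
        _ ≤ (n : ℝ) ^ (2 * α⁻¹) := step4
        _ = Real.exp (2 * α⁻¹ * Real.log n) := step5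
end

section
/- Let X be a random row vector in ℝⁿ whose entries x_j = χ_j ξ_j are independent, where χ_j are Bernoulli(θ) indicators and ξ_j are Rademacher, all independent. For v, w ∈ ℝⁿ with ‖v‖₁, ‖w‖₁ ≤ 1 and ‖v − w‖_∞ ≤ α, the random variable Z = |X·v| − |X·w| satisfies E[Z²] ≤ 2αθ. -/
open MeasureTheory ProbabilityTheory Finset

/-- For a random row X with entries x_j = χ_j ξ_j (χ Bernoulli(θ) indicators, ξ Rademacher,
all independent), and vectors v, w with ‖v‖₁, ‖w‖₁ ≤ 1 and ‖v − w‖_∞ ≤ α, the random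
variable Z = |X·v| − |X·w| satisfies E[Z²] ≤ 2αθ. -/
theorem stmt6 {Ω : Type*} [MeasurableSpace Ω] (μ : Measure Ω) [IsProbabilityMeasure μ]
    (n : ℕ) (θ α : ℝ) (hθ : 0 < θ) (hθ1 : θ < 1) (hα : 0 < α)
    (χ ξ : Fin n → Ω → ℝ)
    (hχmeas : ∀ j, Measurable (χ j)) (hξmeas : ∀ j, Measurable (ξ j))
    (hχval : ∀ j ω, χ j ω = 0 ∨ χ j ω = 1)
    (hχdist : ∀ j, μ {ω | χ j ω = 1} = ENNReal.ofReal θ)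
    (hξval : ∀ j ω, ξ j ω = 1 ∨ ξ j ω = -1)
    (hξdist : ∀ j, μ {ω | ξ j ω = 1} = 1 / 2)
    (hindep : iIndepFun
      (fun j => fun ω => (χ j ω, ξ j ω)) μ)
    (hpair : ∀ j, IndepFun (χ j) (ξ j) μ)
    (v w : Fin n → ℝ) (hv : ∑ j, |v j| ≤ 1) (hw : ∑ j, |w j| ≤ 1)
    (hvw : ∀ j, |v j - w j| ≤ α) :
    ∫ ω, (|∑ j, χ j ω * ξ j ω * v j| - |∑ j, χ j ω * ξ j ω * w j|) ^ 2 ∂μ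
      ≤ 2 * α * θ := by
  set x : Fin n → Ω → ℝ := fun j ω => χ j ω * ξ j ω with hxdef
  have hxmeas : ∀ j, Measurable (x j) := fun j => (hχmeas j).mul (hξmeas j)
  have hxbd : ∀ j ω, |x j ω| ≤ 1 := by
    intro j ω
    rcases hχval j ω with h | h <;> rcases hξval j ω with h' | h' <;>
      simp [hxdef, h, h']
  -- generic integrability from boundedness
  have hint : ∀ (f : Ω → ℝ) (C : ℝ), Measurable f → (∀ ω, |f ω| ≤ C) →
      Integrable f μ := by
    intro f C hm hb
    exact (integrable_const C).mono' hm.aestronglyMeasurable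
      (Filter.Eventually.of_forall (by simpa using hb))
  -- integral of ξ is 0
  have hξint : ∀ j, ∫ ω, ξ j ω ∂μ = 0 := by
    intro j
    have hA : MeasurableSet {ω | ξ j ω = 1} := (hξmeas j) (measurableSet_singleton 1)
    have heq : ∀ ω, ξ j ω =
        2 * Set.indicator {ω | ξ j ω = 1} (fun _ => (1:ℝ)) ω - 1 := by
      intro ω
      rcases hξval j ω with h | h
      · rw [Set.indicator_apply, if_pos (by simpa using h)]; rw [h]; ring
      · rw [Set.indicator_apply, if_neg (by norm_num [h]), h]; ring
    have hi : Integrable (fun ω => Set.indicator {ω | ξ j ω = 1} (fun _ => (1:ℝ)) ω) μ := by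
      rw [integrable_indicator_iff hA]
      exact (integrable_const (1:ℝ)).integrableOn
    calc ∫ ω, ξ j ω ∂μ
        = ∫ ω, 2 * Set.indicator {ω | ξ j ω = 1} (fun _ => (1:ℝ)) ω - 1 ∂μ := by
          exact integral_congr_ae (Filter.Eventually.of_forall heq)
      _ = 2 * ∫ ω, Set.indicator {ω | ξ j ω = 1} (fun _ => (1:ℝ)) ω ∂μ - 1 := by
          rw [integral_sub (hi.const_mul 2) (integrable_const 1), integral_const_mul]
          rw [integral_const]
          simp
      _ = 0 := by
          rw [integral_indicator (hA), setIntegral_const]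
          simp [measureReal_def, hξdist j, ENNReal.toReal_div]
  -- integral of χ is θ
  have hχint : ∀ j, ∫ ω, χ j ω ∂μ = θ := by
    intro j
    have hA : MeasurableSet {ω | χ j ω = 1} := (hχmeas j) (measurableSet_singleton 1)
    have heq : ∀ ω, χ j ω = Set.indicator {ω | χ j ω = 1} (fun _ => (1:ℝ)) ω := by
      intro ω
      rcases hχval j ω with h | h
      · rw [Set.indicator_apply, if_neg (by simp [h]), h]
      · rw [Set.indicator_apply, if_pos (by simpa using h)]; rw [h]
    calc ∫ ω, χ j ω ∂μ
        = ∫ ω, Set.indicator {ω | χ j ω = 1} (fun _ => (1:ℝ)) ω ∂μ :=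
          integral_congr_ae (Filter.Eventually.of_forall heq)
      _ = θ := by
          rw [integral_indicator hA, setIntegral_const]
          simp [measureReal_def, hχdist j, ENNReal.toReal_ofReal hθ.le]
  -- integral of x is 0
  have hxint : ∀ j, ∫ ω, x j ω ∂μ = 0 := by
    intro j
    have := (hpair j).integral_mul_eq_mul_integral (hχmeas j).aestronglyMeasurable
      (hξmeas j).aestronglyMeasurable
    simp only [Pi.mul_apply] at this
    rw [hxdef]
    simp only []
    rw [this, hξint j, mul_zero]
  -- integral of x_j^2 is θ
  have hx2 : ∀ j, ∫ ω, x j ω * x j ω ∂μ = θ := by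
    intro j
    have heq : ∀ ω, x j ω * x j ω = χ j ω := by
      intro ω
      rcases hχval j ω with h | h <;> rcases hξval j ω with h' | h' <;>
        simp [hxdef, h, h']
    rw [integral_congr_ae (Filter.Eventually.of_forall heq), hχint j]
  -- cross terms vanish
  have hcross : ∀ j k, j ≠ k → ∫ ω, x j ω * x k ω ∂μ = 0 := by
    intro j k hjk
    have hI : IndepFun (x j) (x k) μ := by
      have h := hindep.indepFun hjk
      exact h.comp (measurable_fst.mul measurable_snd) (measurable_fst.mul measurable_snd)
    have := hI.integral_mul_eq_mul_integral (hxmeas j).aestronglyMeasurable (hxmeas k).aestronglyMeasurable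
    simp only [Pi.mul_apply] at this
    rw [this,
      hxint j, zero_mul]
  set u : Fin n → ℝ := fun j => v j - w j with hudef
  -- key identity
  have key : ∫ ω, (∑ j, x j ω * u j) ^ 2 ∂μ = θ * ∑ j, u j ^ 2 := by
    have hexp : ∀ ω, (∑ j, x j ω * u j) ^ 2
        = ∑ j, ∑ k, (u j * u k) * (x j ω * x k ω) := by
      intro ω
      rw [sq, Finset.sum_mul_sum]
      refine Finset.sum_congr rfl fun j _ => Finset.sum_congr rfl fun k _ => by ring
    have hintjk : ∀ (j k : Fin n), Integrable (fun ω => (u j * u k) * (x j ω * x k ω)) μ := by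
      intro j k
      refine ((hint (fun ω => x j ω * x k ω) 1 ((hxmeas j).mul (hxmeas k)) ?_).const_mul _)
      intro ω
      rw [abs_mul]
      exact mul_le_one₀ (hxbd j ω) (abs_nonneg _) (hxbd k ω)
    calc ∫ ω, (∑ j, x j ω * u j) ^ 2 ∂μ
        = ∫ ω, ∑ j, ∑ k, (u j * u k) * (x j ω * x k ω) ∂μ :=
          integral_congr_ae (Filter.Eventually.of_forall hexp)
      _ = ∑ j, ∑ k, (u j * u k) * ∫ ω, x j ω * x k ω ∂μ := by
          rw [integral_finset_sum _ (fun j _ => integrable_finset_sum _ (fun k _ => hintjk j k))]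
          refine Finset.sum_congr rfl fun j _ => ?_
          rw [integral_finset_sum _ (fun k _ => hintjk j k)]
          exact Finset.sum_congr rfl fun k _ => integral_const_mul _ _
      _ = ∑ j, u j ^ 2 * θ := by
          refine Finset.sum_congr rfl fun j _ => ?_
          rw [Finset.sum_eq_single j]
          · rw [hx2 j]; ring
          · intro k _ hkj
            rw [hcross j k (Ne.symm hkj), mul_zero]
          · intro h; exact absurd (Finset.mem_univ j) h
      _ = θ * ∑ j, u j ^ 2 := by rw [Finset.mul_sum]; exact Finset.sum_congr rfl fun j _ => by ring
  -- pointwise bound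
  have hpt : ∀ ω, (|∑ j, χ j ω * ξ j ω * v j| - |∑ j, χ j ω * ξ j ω * w j|) ^ 2
      ≤ (∑ j, x j ω * u j) ^ 2 := by
    intro ω
    have hdiff : (∑ j, χ j ω * ξ j ω * v j) - (∑ j, χ j ω * ξ j ω * w j)
        = ∑ j, x j ω * u j := by
      rw [← Finset.sum_sub_distrib]
      exact Finset.sum_congr rfl fun j _ => by simp [hxdef, hudef]; ring
    set a := ∑ j, χ j ω * ξ j ω * v j
    set b := ∑ j, χ j ω * ξ j ω * w j
    have h1 : |a| - |b| ≤ |a - b| := abs_sub_abs_le_abs_sub a b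
    have h2 : -|a - b| ≤ |a| - |b| := by
      have := abs_sub_abs_le_abs_sub b a
      rw [abs_sub_comm] at this
      linarith
    calc (|a| - |b|) ^ 2 ≤ |a - b| ^ 2 := sq_le_sq' h2 h1
      _ = (a - b) ^ 2 := sq_abs _
      _ = (∑ j, x j ω * u j) ^ 2 := by rw [hdiff]
  -- integrability of both sides
  have hsum_bd : ∀ (c : Fin n → ℝ) ω, |∑ j, x j ω * c j| ≤ ∑ j, |c j| := by
    intro c ω
    calc |∑ j, x j ω * c j| ≤ ∑ j, |x j ω * c j| := Finset.abs_sum_le_sum_abs _ _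
      _ ≤ ∑ j, |c j| := Finset.sum_le_sum fun j _ => by
          rw [abs_mul]
          calc |x j ω| * |c j| ≤ 1 * |c j| :=
            mul_le_mul_of_nonneg_right (hxbd j ω) (abs_nonneg _)
          _ = |c j| := one_mul _
  have hlhs_int : Integrable (fun ω =>
      (|∑ j, χ j ω * ξ j ω * v j| - |∑ j, χ j ω * ξ j ω * w j|) ^ 2) μ := by
    refine hint _ 4 ?_ ?_
    · apply Measurable.pow_const
      exact ((Finset.measurable_sum _ fun j _ => ((hχmeas j).mul (hξmeas j)).mul_const _).abs.sub
        (Finset.measurable_sum _ fun j _ => ((hχmeas j).mul (hξmeas j)).mul_const _).abs)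
    · intro ω
      have ha := hsum_bd v ω
      have hb := hsum_bd w ω
      have ha' : |∑ j, χ j ω * ξ j ω * v j| ≤ 1 := le_trans (by exact ha) hv
      have hb' : |∑ j, χ j ω * ξ j ω * w j| ≤ 1 := le_trans (by exact hb) hw
      rw [abs_pow]
      have h1 : |(|∑ j, χ j ω * ξ j ω * v j| - |∑ j, χ j ω * ξ j ω * w j|)| ≤ 2 := by
        rw [abs_sub_le_iff]
        constructor <;> nlinarith [abs_nonneg (∑ j, χ j ω * ξ j ω * v j),
          abs_nonneg (∑ j, χ j ω * ξ j ω * w j)]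
      nlinarith [abs_nonneg ((|∑ j, χ j ω * ξ j ω * v j| - |∑ j, χ j ω * ξ j ω * w j|))]
  have hrhs_int : Integrable (fun ω => (∑ j, x j ω * u j) ^ 2) μ := by
    refine hint _ ((∑ j, |u j|) ^ 2) ?_ ?_
    · exact (Finset.measurable_sum _ fun j _ => (hxmeas j).mul_const _).pow_const _
    · intro ω
      rw [abs_pow]
      have := hsum_bd u ω
      have h0 : (0:ℝ) ≤ |∑ j, x j ω * u j| := abs_nonneg _
      nlinarith
  -- sum bound
  have husum : ∑ j, u j ^ 2 ≤ 2 * α := by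
    have h1 : ∑ j, u j ^ 2 ≤ ∑ j, α * |u j| := by
      refine Finset.sum_le_sum fun j _ => ?_
      have := hvw j
      calc u j ^ 2 = |u j| * |u j| := by rw [← sq_abs, sq]
        _ ≤ α * |u j| := mul_le_mul_of_nonneg_right this (abs_nonneg _)
    have h2 : ∑ j, |u j| ≤ 2 := by
      calc ∑ j, |u j| ≤ ∑ j, (|v j| + |w j|) :=
            Finset.sum_le_sum fun j _ => abs_sub (v j) (w j)
        _ = (∑ j, |v j|) + ∑ j, |w j| := Finset.sum_add_distrib
        _ ≤ 2 := by linarith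
    calc ∑ j, u j ^ 2 ≤ ∑ j, α * |u j| := h1
      _ = α * ∑ j, |u j| := by rw [Finset.mul_sum]
      _ ≤ α * 2 := mul_le_mul_of_nonneg_left h2 hα.le
      _ = 2 * α := by ring
  calc ∫ ω, (|∑ j, χ j ω * ξ j ω * v j| - |∑ j, χ j ω * ξ j ω * w j|) ^ 2 ∂μ
      ≤ ∫ ω, (∑ j, x j ω * u j) ^ 2 ∂μ := integral_mono hlhs_int hrhs_int hpt
    _ = θ * ∑ j, u j ^ 2 := key
    _ ≤ θ * (2 * α) := mul_le_mul_of_nonneg_left husum hθ.le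
    _ = 2 * α * θ := by ring
end

section
/- Let X be an n × p random matrix in which each column independently has a number of nonzero entries distributed so that each entry is nonzero with probability θ = c/n. The probability that X contains three columns that are aligned (each having at least two nonzero entries, occurring in identical sets of positions) is o(1) as n → ∞, provided p = O(n log n). -/
open MeasureTheory ProbabilityTheory Finset Filter
open scoped ENNReal

/-- In the very sparse model (i.i.d. entries, each nonzero with probability c/n) with
p = O(n log n), the probability that X contains three aligned columns (each with at
least two nonzero entries, in identical positions) is o(1) as n → ∞. -/
theorem stmt12 (c C : ℝ) (hc : 0 < c) (hC : 0 < C)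
    (p : ℕ → ℕ) (hp : ∀ n : ℕ, (p n : ℝ) ≤ C * n * Real.log n)
    (Ω : ℕ → Type*) (mΩ : ∀ n, MeasurableSpace (Ω n)) (μ : ∀ n, Measure (Ω n))
    (hμ : ∀ n, IsProbabilityMeasure (μ n))
    (x : ∀ n, Fin (p n) → Fin n → Ω n → ℝ)
    (hmeas : ∀ n j i, Measurable (x n j i))
    (hdist : ∀ n, ∀ j : Fin (p n), ∀ i : Fin n,
      μ n {ω | x n j i ω ≠ 0} = ENNReal.ofReal (c / n))
    (hindep : ∀ n, iIndepFun
      (fun ji : Fin (p n) × Fin n => x n ji.1 ji.2) (μ n)) :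
    Tendsto (fun n =>
      μ n {ω | ∃ j₁ j₂ j₃ : Fin (p n), j₁ ≠ j₂ ∧ j₁ ≠ j₃ ∧ j₂ ≠ j₃ ∧
        2 ≤ {i : Fin n | x n j₁ i ω ≠ 0}.ncard ∧
        2 ≤ {i : Fin n | x n j₂ i ω ≠ 0}.ncard ∧
        2 ≤ {i : Fin n | x n j₃ i ω ≠ 0}.ncard ∧
        ∀ i : Fin n, (x n j₁ i ω ≠ 0 ↔ x n j₂ i ω ≠ 0) ∧
          (x n j₁ i ω ≠ 0 ↔ x n j₃ i ω ≠ 0)})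
      atTop (nhds 0) := by
  classical
  -- Key union bound: for every n, the probability is at most p(n)^3 * n^2 * (c/n)^6.
  have key : ∀ n : ℕ,
      μ n {ω | ∃ j₁ j₂ j₃ : Fin (p n), j₁ ≠ j₂ ∧ j₁ ≠ j₃ ∧ j₂ ≠ j₃ ∧
        2 ≤ {i : Fin n | x n j₁ i ω ≠ 0}.ncard ∧
        2 ≤ {i : Fin n | x n j₂ i ω ≠ 0}.ncard ∧
        2 ≤ {i : Fin n | x n j₃ i ω ≠ 0}.ncard ∧
        ∀ i : Fin n, (x n j₁ i ω ≠ 0 ↔ x n j₂ i ω ≠ 0) ∧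
          (x n j₁ i ω ≠ 0 ↔ x n j₃ i ω ≠ 0)}
      ≤ ((p n : ℝ≥0∞))^3 * (n : ℝ≥0∞)^2 * (ENNReal.ofReal (c / n))^6 := by
    intro n
    set q : ℝ≥0∞ := ENNReal.ofReal (c / n) with hq
    set ι := Fin (p n) × Fin (p n) × Fin (p n) × Fin n × Fin n
    let T : Finset ι := univ.filter
      (fun t => t.1 ≠ t.2.1 ∧ t.1 ≠ t.2.2.1 ∧ t.2.1 ≠ t.2.2.1 ∧ t.2.2.2.1 ≠ t.2.2.2.2)
    let S : ι → Finset (Fin (p n) × Fin n) := fun t =>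
      ({t.1, t.2.1, t.2.2.1} : Finset (Fin (p n))) ×ˢ ({t.2.2.2.1, t.2.2.2.2} : Finset (Fin n))
    let A : ι → Set (Ω n) := fun t => ⋂ k ∈ S t, {ω | x n k.1 k.2 ω ≠ 0}
    have hsub : {ω | ∃ j₁ j₂ j₃ : Fin (p n), j₁ ≠ j₂ ∧ j₁ ≠ j₃ ∧ j₂ ≠ j₃ ∧
        2 ≤ {i : Fin n | x n j₁ i ω ≠ 0}.ncard ∧
        2 ≤ {i : Fin n | x n j₂ i ω ≠ 0}.ncard ∧
        2 ≤ {i : Fin n | x n j₃ i ω ≠ 0}.ncard ∧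
        ∀ i : Fin n, (x n j₁ i ω ≠ 0 ↔ x n j₂ i ω ≠ 0) ∧
          (x n j₁ i ω ≠ 0 ↔ x n j₃ i ω ≠ 0)} ⊆ ⋃ t ∈ T, A t := by
      rintro ω ⟨j₁, j₂, j₃, h12, h13, h23, hn1, _, _, hiff⟩
      have h2 : 1 < {i : Fin n | x n j₁ i ω ≠ 0}.ncard := hn1
      obtain ⟨i₁, i₂, hi₁, hi₂, hii⟩ := (Set.one_lt_ncard_iff (Set.toFinite _)).1 h2
      refine Set.mem_iUnion₂.2 ⟨(j₁, j₂, j₃, i₁, i₂), ?_, ?_⟩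
      · simp [T, h12, h13, h23, hii]
      · refine Set.mem_iInter₂.2 ?_
        rintro ⟨jk, ik⟩ hk
        simp only [S, Finset.mem_product, Finset.mem_insert, Finset.mem_singleton] at hk
        have hik : x n j₁ ik ω ≠ 0 := by
          rcases hk.2 with h | h <;> subst h <;> assumption
        rcases hk.1 with h | h | h <;> subst h
        · exact hik
        · exact ((hiff ik).1).1 hik
        · exact ((hiff ik).2).1 hik
    have hA : ∀ t ∈ T, μ n (A t) = q ^ 6 := by
      rintro ⟨j₁, j₂, j₃, i₁, i₂⟩ ht
      simp only [T, Finset.mem_filter] at ht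
      obtain ⟨-, h12, h13, h23, hii⟩ := ht
      have hmeas' : ∀ k ∈ S (j₁, j₂, j₃, i₁, i₂),
          MeasurableSet[MeasurableSpace.comap
            (fun ω => x n k.1 k.2 ω) inferInstance] {ω | x n k.1 k.2 ω ≠ 0} :=
        fun k _ => ⟨{(0:ℝ)}ᶜ, (measurableSet_singleton 0).compl, rfl⟩
      have := (hindep n).meas_biInter (S := S (j₁, j₂, j₃, i₁, i₂))
        (s := fun k => {ω | x n k.1 k.2 ω ≠ 0}) hmeas'
      rw [show A (j₁, j₂, j₃, i₁, i₂) = ⋂ k ∈ S (j₁, j₂, j₃, i₁, i₂),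
          {ω | x n k.1 k.2 ω ≠ 0} from rfl, this]
      have hconst : ∀ k ∈ S (j₁, j₂, j₃, i₁, i₂), μ n {ω | x n k.1 k.2 ω ≠ 0} = q :=
        fun k _ => hdist n k.1 k.2
      rw [Finset.prod_congr rfl hconst, Finset.prod_const]
      congr 1
      have hcard1 : ({j₁, j₂, j₃} : Finset (Fin (p n))).card = 3 := by
        rw [Finset.card_insert_of_notMem (by simp [h12, h13]),
          Finset.card_insert_of_notMem (by simp [h23]), Finset.card_singleton]
      have hcard2 : ({i₁, i₂} : Finset (Fin n)).card = 2 := by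
        rw [Finset.card_insert_of_notMem (by simp [hii]), Finset.card_singleton]
      simp [S, Finset.card_product, hcard1, hcard2]
    calc μ n {ω | ∃ j₁ j₂ j₃ : Fin (p n), j₁ ≠ j₂ ∧ j₁ ≠ j₃ ∧ j₂ ≠ j₃ ∧
        2 ≤ {i : Fin n | x n j₁ i ω ≠ 0}.ncard ∧
        2 ≤ {i : Fin n | x n j₂ i ω ≠ 0}.ncard ∧
        2 ≤ {i : Fin n | x n j₃ i ω ≠ 0}.ncard ∧
        ∀ i : Fin n, (x n j₁ i ω ≠ 0 ↔ x n j₂ i ω ≠ 0) ∧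
          (x n j₁ i ω ≠ 0 ↔ x n j₃ i ω ≠ 0)}
        ≤ μ n (⋃ t ∈ T, A t) := measure_mono hsub
      _ ≤ ∑ t ∈ T, μ n (A t) := measure_biUnion_finset_le T A
      _ = T.card * q ^ 6 := by
          rw [Finset.sum_congr rfl hA, Finset.sum_const, nsmul_eq_mul]
      _ ≤ ((Finset.univ : Finset ι).card : ℝ≥0∞) * q ^ 6 := by
          exact mul_le_mul_left
            (by exact_mod_cast Finset.card_le_card (Finset.filter_subset _ _)) _
      _ = ((p n : ℝ≥0∞))^3 * (n : ℝ≥0∞)^2 * q^6 := by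
          simp only [Finset.card_univ]
          simp [ι, Fintype.card_prod]
          push_cast
          ring
  -- The real-valued upper bound tends to zero.
  have hreal : Tendsto (fun n : ℕ => (C * n * Real.log n)^3 * (n:ℝ)^2 * (c / n)^6)
      atTop (nhds 0) := by
    have h0 : Tendsto (fun y : ℝ => C^3 * c^6 * (Real.log y ^ 3 / (1 * y + 0)))
        atTop (nhds 0) := by
      have := (Real.tendsto_pow_log_div_mul_add_atTop 1 0 3 one_ne_zero).const_mul
        (C^3 * c^6)
      simpa using this
    have h1 : Tendsto (fun n : ℕ => C^3 * c^6 * (Real.log n ^ 3 / (1 * n + 0)))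
        atTop (nhds 0) := h0.comp tendsto_natCast_atTop_atTop
    refine h1.congr' ?_
    filter_upwards [eventually_ge_atTop 1] with n hn
    have hn0 : (n : ℝ) ≠ 0 := by positivity
    field_simp
    ring
  have hupper : Tendsto (fun n : ℕ =>
      ENNReal.ofReal ((C * n * Real.log n)^3 * (n:ℝ)^2 * (c / n)^6)) atTop (nhds 0) := by
    have := ENNReal.tendsto_ofReal hreal
    simpa using this
  refine tendsto_of_tendsto_of_tendsto_of_le_of_le' tendsto_const_nhds hupper
    (Eventually.of_forall fun n => zero_le) ?_
  filter_upwards [eventually_ge_atTop 1] with n hn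
  have hn0 : (0:ℝ) < n := by exact_mod_cast hn
  have hlog : 0 ≤ Real.log n := Real.log_natCast_nonneg n
  have hcn : 0 ≤ c / n := le_of_lt (div_pos hc hn0)
  refine (key n).trans ?_
  have heq : ((p n : ℝ≥0∞))^3 * (n : ℝ≥0∞)^2 * (ENNReal.ofReal (c / n))^6
      = ENNReal.ofReal (((p n : ℝ))^3 * (n:ℝ)^2 * (c / n)^6) := by
    rw [ENNReal.ofReal_mul (by positivity), ENNReal.ofReal_mul (by positivity),
      ENNReal.ofReal_pow (by positivity), ENNReal.ofReal_pow (by positivity),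
      ENNReal.ofReal_pow hcn, ENNReal.ofReal_natCast, ENNReal.ofReal_natCast]
  rw [heq]
  apply ENNReal.ofReal_le_ofReal
  have h3 : ((p n : ℝ))^3 ≤ (C * n * Real.log n)^3 :=
    pow_le_pow_left₀ (by positivity) (hp n) 3
  have hrest : (0:ℝ) ≤ (n:ℝ)^2 * (c / n)^6 := by positivity
  calc ((p n : ℝ))^3 * (n:ℝ)^2 * (c / n)^6
      = ((p n : ℝ))^3 * ((n:ℝ)^2 * (c / n)^6) := by ring
    _ ≤ (C * n * Real.log n)^3 * ((n:ℝ)^2 * (c / n)^6) :=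
        mul_le_mul_of_nonneg_right h3 hrest
    _ = (C * n * Real.log n)^3 * (n:ℝ)^2 * (c / n)^6 := by ring
end

section
/- Let X be an n × p random matrix with i.i.d. Bernoulli(θ) support, θ = c/n for constant c > 0, and p ≥ C n log n for a sufficiently large constant C. Then with probability 1 − o(1), for every row index i there exist at least three columns of X equal to a nonzero multiple of the standard basis vector e_i (i.e., every column of the dictionary is well represented). -/
open MeasureTheory ProbabilityTheory Finset Filter

section Aux

variable {Ω : Type} [MeasurableSpace Ω] {μ : Measure Ω} {P N : ℕ} {c : ℝ}

/-- The representing event for column `j`, row `i`. -/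
def reprEvent (x : Fin P → Fin N → Ω → ℝ) (i : Fin N) (j : Fin P) : Set Ω :=
  {ω | x j i ω ≠ 0 ∧ ∀ i' : Fin N, i' ≠ i → x j i' ω = 0}

lemma reprEvent_measurableSet (x : Fin P → Fin N → Ω → ℝ)
    (hmeas : ∀ j i, Measurable (x j i)) (i : Fin N) (j : Fin P) :
    MeasurableSet (reprEvent x i j) := by
  have : reprEvent x i j
      = (x j i ⁻¹' ({0}ᶜ)) ∩ ⋂ i' ∈ ({i}ᶜ : Set (Fin N)), (x j i' ⁻¹' {0}) := by
    ext ω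
    simp [reprEvent, Set.mem_iInter]
  rw [this]
  exact ((hmeas j i) (measurableSet_singleton 0).compl).inter
    (MeasurableSet.biInter (Set.to_countable _)
      (fun i' _ => (hmeas j i') (measurableSet_singleton 0)))

lemma reprEvent_prob [IsProbabilityMeasure μ]
    (x : Fin P → Fin N → Ω → ℝ)
    (hmeas : ∀ j i, Measurable (x j i))
    (hber : ∀ (j : Fin P) (i : Fin N), μ {ω | x j i ω ≠ 0} = ENNReal.ofReal (c / N))
    (hind : iIndepFun (fun ji : Fin P × Fin N => x ji.1 ji.2) μ)
    (i : Fin N) (j : Fin P) :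
    μ (reprEvent x i j)
      = ENNReal.ofReal (c / N) * (1 - ENNReal.ofReal (c / N)) ^ (N - 1) := by
  classical
  have hI : iIndep (fun ji : Fin P × Fin N =>
      MeasurableSpace.comap (fun ω => x ji.1 ji.2 ω) inferInstance) μ := hind
  set s : Fin P × Fin N → Set Ω :=
    fun ji => x ji.1 ji.2 ⁻¹' (if ji.2 = i then ({0}ᶜ : Set ℝ) else {0}) with hs
  have hmeas_s : ∀ ji : Fin P × Fin N, ji ∈ ({j} ×ˢ (univ : Finset (Fin N))) →
      MeasurableSet[MeasurableSpace.comap (fun ω => x ji.1 ji.2 ω) inferInstance] (s ji) := by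
    intro ji _
    refine ⟨if ji.2 = i then ({0}ᶜ : Set ℝ) else {0}, ?_, rfl⟩
    split_ifs
    · exact (measurableSet_singleton 0).compl
    · exact measurableSet_singleton 0
  have key := hI.meas_biInter (S := ({j} ×ˢ (univ : Finset (Fin N)))) hmeas_s
  have hset : (⋂ ji ∈ ({j} ×ˢ (univ : Finset (Fin N))), s ji) = reprEvent x i j := by
    ext ω
    simp only [Set.mem_iInter, Finset.mem_product, Finset.mem_singleton, Finset.mem_univ,
      and_true, reprEvent, Set.mem_setOf_eq]
    constructor
    · intro h
      constructor
      · have := h (j, i) rfl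
        simpa [s] using this
      · intro i' hi'
        have := h (j, i') rfl
        simpa [s, hi'] using this
    · rintro ⟨h1, h2⟩ ji hji
      subst hji
      by_cases h : ji.2 = i
      · simpa [s, h] using h1
      · simpa [s, h] using h2 ji.2 h
  have hzero : ∀ i' : Fin N, μ (x j i' ⁻¹' {0}) = 1 - ENNReal.ofReal (c / N) := by
    intro i'
    have h1 : (x j i' ⁻¹' {0}) = {ω | x j i' ω ≠ 0}ᶜ := by
      ext ω; simp
    have hm : MeasurableSet {ω | x j i' ω ≠ 0} := by
      have : {ω | x j i' ω ≠ 0} = x j i' ⁻¹' ({0}ᶜ) := by ext ω; simp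
      rw [this]; exact (hmeas j i') (measurableSet_singleton 0).compl
    rw [h1, measure_compl hm (measure_ne_top _ _), hber j i', measure_univ]
  rw [hset] at key
  rw [key, Finset.singleton_product, Finset.prod_map]
  have : ∀ i' : Fin N,
      μ (s ((⟨Prod.mk j, Prod.mk_right_injective j⟩ :
          Function.Embedding (Fin N) (Fin P × Fin N)) i'))
        = if i' = i then ENNReal.ofReal (c / N) else 1 - ENNReal.ofReal (c / N) := by
    intro i'
    simp only [Function.Embedding.coeFn_mk, s]
    by_cases h : i' = i
    · rw [if_pos h, if_pos h]
      have : (x j i' ⁻¹' ({0}ᶜ)) = {ω | x j i' ω ≠ 0} := by ext ω; simp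
      rw [this, hber]
    · rw [if_neg h, if_neg h]
      exact hzero i'
  rw [Finset.prod_congr rfl (fun i' _ => this i')]
  rw [← Finset.mul_prod_erase univ _ (mem_univ i), if_pos rfl]
  congr 1
  rw [Finset.prod_congr rfl (fun i' hi' => if_neg (Finset.mem_erase.1 hi').1),
    Finset.prod_const, Finset.card_erase_of_mem (mem_univ i), Finset.card_univ,
    Fintype.card_fin]

lemma reprEvent_eq_iInter (x : Fin P → Fin N → Ω → ℝ) (i : Fin N) (j : Fin P) :
    reprEvent x i j = ⋂ i' : Fin N,
      x j i' ⁻¹' (if i' = i then ({0}ᶜ : Set ℝ) else {0}) := by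
  ext ω
  simp only [reprEvent, Set.mem_setOf_eq, Set.mem_iInter, Set.mem_preimage]
  constructor
  · rintro ⟨h1, h2⟩ i'
    by_cases h : i' = i
    · subst h; simp [if_pos rfl, h1]
    · simpa [h] using h2 i' h
  · intro h
    refine ⟨by simpa using h i, fun i' hi' => by simpa [hi'] using h i'⟩

lemma reprEvent_measurableSet' {m' : MeasurableSpace Ω}
    (x : Fin P → Fin N → Ω → ℝ) (i : Fin N) (j : Fin P)
    (hle : ∀ i' : Fin N, MeasurableSpace.comap (x j i') inferInstance ≤ m') :
    MeasurableSet[m'] (reprEvent x i j) := by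
  rw [reprEvent_eq_iInter]
  refine MeasurableSet.iInter (fun i' => ?_)
  refine hle i' _ ⟨if i' = i then ({0}ᶜ : Set ℝ) else {0}, ?_, rfl⟩
  split_ifs
  · exact (measurableSet_singleton 0).compl
  · exact measurableSet_singleton 0

lemma reprEvent_compl_inter_prob [IsProbabilityMeasure μ]
    (x : Fin P → Fin N → Ω → ℝ)
    (hmeas : ∀ j i, Measurable (x j i))
    (hind : iIndepFun (fun ji : Fin P × Fin N => x ji.1 ji.2) μ)
    (i : Fin N) (G : Finset (Fin P)) :
    μ (⋂ j ∈ G, (reprEvent x i j)ᶜ) = ∏ j ∈ G, μ ((reprEvent x i j)ᶜ) := by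
  classical
  have hI : iIndep (fun ji : Fin P × Fin N =>
      MeasurableSpace.comap (fun ω => x ji.1 ji.2 ω) inferInstance) μ := hind
  have hle : ∀ ji : Fin P × Fin N,
      MeasurableSpace.comap (fun ω => x ji.1 ji.2 ω) inferInstance ≤ ‹MeasurableSpace Ω› :=
    fun ji => (hmeas ji.1 ji.2).comap_le
  induction G using Finset.induction_on with
  | empty => simp
  | insert j G hj ih =>
    rw [Finset.set_biInter_insert, Finset.prod_insert hj, ← ih]
    have hIndep := indep_iSup_of_disjoint hle hI
      (S := {ji : Fin P × Fin N | ji.1 = j}) (T := {ji : Fin P × Fin N | ji.1 ∈ G})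
      (by
        rw [Set.disjoint_left]
        rintro ⟨j', i'⟩ h1 h2
        simp only [Set.mem_setOf_eq] at h1 h2
        exact hj (h1 ▸ h2))
    have h1 : MeasurableSet[⨆ ji ∈ {ji : Fin P × Fin N | ji.1 = j}, MeasurableSpace.comap
        (fun ω => x ji.1 ji.2 ω) inferInstance] ((reprEvent x i j)ᶜ) := by
      refine MeasurableSet.compl ?_
      refine reprEvent_measurableSet' x i j (fun i' => ?_)
      exact le_iSup₂ (f := fun (ji : Fin P × Fin N) (_ : ji ∈ {ji : Fin P × Fin N | ji.1 = j}) =>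
        MeasurableSpace.comap (fun ω => x ji.1 ji.2 ω) inferInstance) (j, i') rfl
    have h2 : MeasurableSet[⨆ ji ∈ {ji : Fin P × Fin N | ji.1 ∈ G}, MeasurableSpace.comap
        (fun ω => x ji.1 ji.2 ω) inferInstance] (⋂ j' ∈ G, (reprEvent x i j')ᶜ) := by
      refine MeasurableSet.biInter (Set.to_countable _) (fun j' hj' => ?_)
      refine MeasurableSet.compl ?_
      refine reprEvent_measurableSet' x i j' (fun i' => ?_)
      exact le_iSup₂ (f := fun (ji : Fin P × Fin N) (_ : ji ∈ {ji : Fin P × Fin N | ji.1 ∈ G}) =>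
        MeasurableSpace.comap (fun ω => x ji.1 ji.2 ω) inferInstance) (j', i') hj'
    exact (Indep_iff _ _ _).1 hIndep _ _ h1 h2

end Aux

def grp3 (P : ℕ) (hP : 0 < P) (k : ℕ) : Finset (Fin P) :=
  (Finset.range (P / 3)).image (fun t => ⟨(3 * t + k) % P, Nat.mod_lt _ hP⟩)

lemma grp3_mod (P : ℕ) (hP : 0 < P) (k : ℕ) (hk : k < 3) {j : Fin P}
    (hj : j ∈ grp3 P hP k) : j.val % 3 = k := by
  obtain ⟨t, ht, rfl⟩ := Finset.mem_image.1 hj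
  simp only [Finset.mem_range] at ht
  have h3 : P/3*3 ≤ P := Nat.div_mul_le_self P 3
  have he : (3*t+k) % P = 3*t+k := Nat.mod_eq_of_lt (by omega)
  simp only [he]
  omega

lemma grp3_card (P : ℕ) (hP : 0 < P) (k : ℕ) (hk : k < 3) :
    (grp3 P hP k).card = P / 3 := by
  rw [grp3, Finset.card_image_of_injOn, Finset.card_range]
  intro t ht t' ht' h
  simp only [Finset.coe_range, Set.mem_Iio] at ht ht'
  have h3 : P/3*3 ≤ P := Nat.div_mul_le_self P 3
  have he : (3*t+k) % P = 3*t+k := Nat.mod_eq_of_lt (by omega)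
  have he' : (3*t'+k) % P = 3*t'+k := Nat.mod_eq_of_lt (by omega)
  have := congrArg Fin.val h
  simp only [he, he'] at this
  omega

set_option maxHeartbeats 1000000 in
lemma real_bound3 (c α : ℝ) (hc : 0 < c) (hαdef : α = c * Real.exp (-(2*c)))
    (n P : ℕ) (hn3 : 3 ≤ n) (hnc : 2*c ≤ n) (hP : (9/α + 1) * n * Real.log n ≤ (P:ℝ)) :
    (n:ℝ) * (3 * (1 - (c/n * (1 - c/n)^(n-1)))^(P/3)) ≤ 3 * Real.exp α / n := by
  have hα0 : 0 < α := by rw [hαdef]; positivity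
  have hn3' : (3:ℝ) ≤ n := by exact_mod_cast hn3
  have hn0 : (0:ℝ) < n := by linarith
  set θ := c/(n:ℝ) with hθdef
  have hθ0 : 0 < θ := by positivity
  have hθh : θ ≤ 1/2 := by
    rw [hθdef, div_le_iff₀ hn0]; linarith
  set r := θ * (1-θ)^(n-1) with hrdef
  have hexpθ : Real.exp (-(2*θ)) ≤ 1 - θ := by
    have h1 : 1 + 2*θ ≤ Real.exp (2*θ) := by
      have := Real.add_one_le_exp (2*θ); linarith
    have h2 : Real.exp (-(2*θ)) = (Real.exp (2*θ))⁻¹ := Real.exp_neg _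
    have h3 : (Real.exp (2*θ))⁻¹ ≤ (1+2*θ)⁻¹ := by
      apply inv_anti₀ (by positivity) h1
    have h4 : (1+2*θ)⁻¹ ≤ 1-θ := by
      rw [inv_le_iff_one_le_mul₀ (by positivity)]
      nlinarith
    rw [h2]; linarith
  have hpow : Real.exp (-(2*c)) ≤ (1-θ)^(n-1) := by
    have hθn : θ * ((n:ℝ)-1) ≤ c := by
      rw [hθdef, div_mul_eq_mul_div, div_le_iff₀ hn0]
      nlinarith
    calc Real.exp (-(2*c)) ≤ Real.exp ((n-1 : ℕ) * (-(2*θ))) := by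
          apply Real.exp_le_exp.2
          have hcast : ((n-1 : ℕ) : ℝ) = (n:ℝ) - 1 := by
            have : 1 ≤ n := by omega
            push_cast [this]; ring
          rw [hcast]; nlinarith
      _ = (Real.exp (-(2*θ)))^(n-1) := Real.exp_nat_mul _ _
      _ ≤ (1-θ)^(n-1) := pow_le_pow_left₀ (Real.exp_pos _).le hexpθ _
  have hrα : α/n ≤ r := by
    rw [hαdef, hrdef]
    have : c * Real.exp (-(2*c)) / n = θ * Real.exp (-(2*c)) := by
      rw [hθdef]; ring
    rw [this]
    exact mul_le_mul_of_nonneg_left hpow hθ0.le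
  have h1θ : (0:ℝ) ≤ 1 - θ := by linarith
  have hr1 : r ≤ 1 := by
    have hp1 : (1-θ)^(n-1) ≤ 1 := pow_le_one₀ h1θ (by linarith)
    nlinarith
  have hr0 : 0 ≤ r := mul_nonneg hθ0.le (pow_nonneg h1θ _)
  set m := P/3 with hmdef
  have hm3 : (P:ℝ) - 2 ≤ 3*(m:ℝ) := by
    have : P ≤ 3*(P/3) + 2 := by omega
    have := (Nat.cast_le (α := ℝ)).2 this
    push_cast at this
    linarith
  have hlogn : 1 ≤ Real.log n := by
    rw [Real.le_log_iff_exp_le hn0]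
    calc Real.exp 1 ≤ 2.7182818286 := Real.exp_one_lt_d9.le
      _ ≤ 3 := by norm_num
      _ ≤ n := hn3'
  have hL0 : (0:ℝ) ≤ Real.log n := by linarith
  have hm0 : (0:ℝ) ≤ (m:ℝ) := Nat.cast_nonneg m
  have hrm : 3 * Real.log n - α ≤ r * m := by
    have step1 : α/n * m ≤ r * m := mul_le_mul_of_nonneg_right hrα hm0
    have step2 : 3 * Real.log n - α ≤ α/n * m := by
      rw [div_mul_eq_mul_div, le_div_iff₀ hn0]
      have e1 : α * ((9/α+1) * n * Real.log n) = (9+α) * ((n:ℝ) * Real.log n) := by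
        field_simp
      have A1 : (9+α) * ((n:ℝ) * Real.log n) ≤ α * P := by
        rw [← e1]
        exact mul_le_mul_of_nonneg_left hP hα0.le
      have A2 : α * ((P:ℝ) - 2) ≤ α * (3*m) := mul_le_mul_of_nonneg_left hm3 hα0.le
      have hnL : (0:ℝ) ≤ (n:ℝ) * Real.log n := mul_nonneg hn0.le hL0
      nlinarith [mul_le_mul_of_nonneg_left hn3' hα0.le, mul_nonneg hα0.le hnL]
    linarith
  have h1r : (0:ℝ) ≤ 1 - r := by linarith
  have hfinal : (1-r)^m ≤ Real.exp α / (n:ℝ)^3 := by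
    calc (1-r)^m ≤ (Real.exp (-r))^m := by
          apply pow_le_pow_left₀ h1r
          have := Real.add_one_le_exp (-r); linarith
      _ = Real.exp ((m:ℕ) * (-r)) := (Real.exp_nat_mul _ _).symm
      _ ≤ Real.exp (α - 3*Real.log n) := by
          apply Real.exp_le_exp.2
          have : ((m:ℕ) : ℝ) * (-r) = -(r * m) := by ring
          rw [this]; linarith
      _ = Real.exp α / (n:ℝ)^3 := by
          rw [Real.exp_sub]
          congr 1
          rw [show (3:ℝ)*Real.log n = Real.log ((n:ℝ)^3) by rw [Real.log_pow]; push_cast; ring]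
          exact Real.exp_log (by positivity)
  have hE0 : 0 ≤ Real.exp α := (Real.exp_pos _).le
  have step : (n:ℝ) * (3 * (1-r)^m) ≤ (n:ℝ) * (3 * (Real.exp α / n^3)) := by
    apply mul_le_mul_of_nonneg_left _ hn0.le
    linarith
  have e2 : (n:ℝ) * (3 * (Real.exp α / n^3)) = 3 * Real.exp α / (n:ℝ)^2 := by
    field_simp
  have e3 : 3 * Real.exp α / (n:ℝ)^2 ≤ 3 * Real.exp α / n := by
    apply div_le_div_of_nonneg_left (by positivity) hn0
    nlinarith
  calc (n:ℝ) * (3 * (1-r)^m)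
      ≤ (n:ℝ) * (3 * (Real.exp α / n^3)) := step
    _ = 3 * Real.exp α / (n:ℝ)^2 := e2
    _ ≤ 3 * Real.exp α / n := e3

/-- In the very sparse model (i.i.d. Bernoulli(c/n) support), there is a constant C such
that if p ≥ C n log n then with probability 1 − o(1) every row index i has at least three
columns of X whose unique nonzero entry is in row i (every column of A is well
represented). -/
theorem stmt13 (c : ℝ) (hc : 0 < c) :
    ∃ C : ℝ, 0 < C ∧
      ∀ (p : ℕ → ℕ) (_ : ∀ n : ℕ, C * n * Real.log n ≤ (p n : ℝ))
        (Ω : ℕ → Type) (mΩ : ∀ n, MeasurableSpace (Ω n)) (μ : ∀ n, Measure (Ω n))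
        (_ : ∀ n, IsProbabilityMeasure (μ n))
        (x : ∀ n, Fin (p n) → Fin n → Ω n → ℝ)
        (_ : ∀ n j i, Measurable (x n j i))
        (_ : ∀ n, ∀ j : Fin (p n), ∀ i : Fin n,
          μ n {ω | x n j i ω ≠ 0} = ENNReal.ofReal (c / n))
        (_ : ∀ n, iIndepFun
          (fun ji : Fin (p n) × Fin n => x n ji.1 ji.2) (μ n)),
        Tendsto (fun n =>
          μ n {ω | ∀ i : Fin n, ∃ j₁ j₂ j₃ : Fin (p n),
            j₁ ≠ j₂ ∧ j₁ ≠ j₃ ∧ j₂ ≠ j₃ ∧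
            (∀ j ∈ ({j₁, j₂, j₃} : Set (Fin (p n))),
              x n j i ω ≠ 0 ∧ ∀ i' : Fin n, i' ≠ i → x n j i' ω = 0)})
          atTop (nhds 1) := by
  classical
  refine ⟨9 / (c * Real.exp (-(2*c))) + 1, by positivity, ?_⟩
  intro p hp Ω mΩ μ hprob x hmeas hber hind
  set α := c * Real.exp (-(2*c)) with hαdef
  have hα0 : 0 < α := by rw [hαdef]; positivity
  set N₀ : ℕ := max 3 ⌈2*c⌉₊ with hN₀def
  have key : ∀ n : ℕ, N₀ ≤ n →
      1 - ENNReal.ofReal (3 * Real.exp α / n) ≤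
        μ n {ω | ∀ i : Fin n, ∃ j₁ j₂ j₃ : Fin (p n),
          j₁ ≠ j₂ ∧ j₁ ≠ j₃ ∧ j₂ ≠ j₃ ∧
          (∀ j ∈ ({j₁, j₂, j₃} : Set (Fin (p n))),
            x n j i ω ≠ 0 ∧ ∀ i' : Fin n, i' ≠ i → x n j i' ω = 0)} := by
    intro n hn
    haveI := hprob n
    have hn3 : 3 ≤ n := le_trans (le_max_left _ _) hn
    have hn3' : (3:ℝ) ≤ n := by exact_mod_cast hn3
    have hn0 : (0:ℝ) < n := by linarith
    have hnc : 2*c ≤ (n:ℝ) := by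
      have h1 : (⌈2*c⌉₊ : ℝ) ≤ n := by
        exact_mod_cast le_trans (le_max_right 3 ⌈2*c⌉₊) hn
      exact le_trans (Nat.le_ceil _) h1
    have hPr : (9/α + 1) * n * Real.log n ≤ (p n : ℝ) := hp n
    have hlogn : 1 ≤ Real.log n := by
      rw [Real.le_log_iff_exp_le hn0]
      calc Real.exp 1 ≤ 2.7182818286 := Real.exp_one_lt_d9.le
        _ ≤ 3 := by norm_num
        _ ≤ n := hn3'
    have hp3 : 3 ≤ p n := by
      have hC1 : (1:ℝ) ≤ 9/α + 1 := by
        have : 0 < 9/α := by positivity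
        linarith
      have hA : (3:ℝ) ≤ (9/α+1)*n := by nlinarith
      have hB : (9/α+1)*(n:ℝ) ≤ (9/α+1)*n*Real.log n := by nlinarith
      have : (3:ℝ) ≤ (p n : ℝ) := by linarith
      exact_mod_cast this
    have hP0 : 0 < p n := by omega
    have hθ0 : (0:ℝ) < c/(n:ℝ) := by positivity
    have hθh : c/(n:ℝ) ≤ 1/2 := by rw [div_le_iff₀ hn0]; linarith
    have h1θ : (0:ℝ) ≤ 1 - c/(n:ℝ) := by linarith
    set r : ℝ := c/(n:ℝ) * (1 - c/(n:ℝ))^(n-1) with hrdef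
    have hr0 : 0 ≤ r := mul_nonneg hθ0.le (pow_nonneg h1θ _)
    have hr1 : r ≤ 1 := by
      have hp1 : (1 - c/(n:ℝ))^(n-1) ≤ 1 := pow_le_one₀ h1θ (by linarith)
      rw [hrdef]; nlinarith
    have h1r : (0:ℝ) ≤ 1 - r := by linarith
    -- probability of one representing event
    have hμA : ∀ (i : Fin n) (j : Fin (p n)),
        μ n (reprEvent (x n) i j) = ENNReal.ofReal r := by
      intro i j
      rw [reprEvent_prob (μ := μ n) (x n) (hmeas n) (fun j i => hber n j i) (hind n) i j]
      rw [hrdef, ENNReal.ofReal_mul hθ0.le, ENNReal.ofReal_pow h1θ,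
        ENNReal.ofReal_sub _ hθ0.le, ENNReal.ofReal_one]
    have hμAc : ∀ (i : Fin n) (j : Fin (p n)),
        μ n ((reprEvent (x n) i j)ᶜ) = ENNReal.ofReal (1 - r) := by
      intro i j
      rw [prob_compl_eq_one_sub (reprEvent_measurableSet (x n) (hmeas n) i j), hμA i j,
        ENNReal.ofReal_sub _ hr0, ENNReal.ofReal_one]
    have hgrp : ∀ (i : Fin n) (k : ℕ), k < 3 →
        μ n (⋂ j ∈ grp3 (p n) hP0 k, (reprEvent (x n) i j)ᶜ)
          = ENNReal.ofReal ((1-r)^(p n / 3)) := by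
      intro i k hk
      rw [reprEvent_compl_inter_prob (x n) (hmeas n) (hind n) i,
        Finset.prod_congr rfl (fun j _ => hμAc i j), Finset.prod_const,
        grp3_card (p n) hP0 k hk, ENNReal.ofReal_pow h1r]
    -- inclusion of the bad event
    have hincl : {ω | ∀ i : Fin n, ∃ j₁ j₂ j₃ : Fin (p n),
          j₁ ≠ j₂ ∧ j₁ ≠ j₃ ∧ j₂ ≠ j₃ ∧
          (∀ j ∈ ({j₁, j₂, j₃} : Set (Fin (p n))),
            x n j i ω ≠ 0 ∧ ∀ i' : Fin n, i' ≠ i → x n j i' ω = 0)}ᶜ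
        ⊆ ⋃ i : Fin n, ⋃ k : Fin 3,
            ⋂ j ∈ grp3 (p n) hP0 k.val, (reprEvent (x n) i j)ᶜ := by
      intro ω hω
      simp only [Set.mem_compl_iff, Set.mem_setOf_eq, not_forall] at hω
      obtain ⟨i, hi⟩ := hω
      simp only [Set.mem_iUnion]
      refine ⟨i, ?_⟩
      by_contra hcon
      push_neg at hcon
      have hex : ∀ k : Fin 3, ∃ j ∈ grp3 (p n) hP0 k.val, ω ∈ reprEvent (x n) i j := by
        intro k
        have h := hcon k
        simp only [Set.mem_iInter, Set.mem_compl_iff, not_forall, not_not] at h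
        obtain ⟨j, hj, hA⟩ := h
        exact ⟨j, hj, hA⟩
      obtain ⟨j₀, hj₀, hA₀⟩ := hex 0
      obtain ⟨j₁, hj₁, hA₁⟩ := hex 1
      obtain ⟨j₂, hj₂, hA₂⟩ := hex 2
      have m₀ : j₀.val % 3 = 0 := grp3_mod _ _ _ (by norm_num) hj₀
      have m₁ : j₁.val % 3 = 1 := grp3_mod _ _ _ (by norm_num) hj₁
      have m₂ : j₂.val % 3 = 2 := grp3_mod _ _ _ (by norm_num) hj₂
      refine hi ⟨j₀, j₁, j₂, ?_, ?_, ?_, ?_⟩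
      · intro h; rw [h] at m₀; omega
      · intro h; rw [h] at m₀; omega
      · intro h; rw [h] at m₁; omega
      · intro j hj
        simp only [Set.mem_insert_iff, Set.mem_singleton_iff] at hj
        rcases hj with rfl | rfl | rfl
        exacts [hA₀, hA₁, hA₂]
    -- union bound
    have hbad : μ n ({ω | ∀ i : Fin n, ∃ j₁ j₂ j₃ : Fin (p n),
          j₁ ≠ j₂ ∧ j₁ ≠ j₃ ∧ j₂ ≠ j₃ ∧
          (∀ j ∈ ({j₁, j₂, j₃} : Set (Fin (p n))),
            x n j i ω ≠ 0 ∧ ∀ i' : Fin n, i' ≠ i → x n j i' ω = 0)}ᶜ)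
        ≤ ENNReal.ofReal (3 * Real.exp α / n) := by
      have hreal := real_bound3 c α hc hαdef n (p n) hn3 hnc hPr
      rw [← hrdef] at hreal
      calc μ n _ ≤ μ n (⋃ i : Fin n, ⋃ k : Fin 3,
            ⋂ j ∈ grp3 (p n) hP0 k.val, (reprEvent (x n) i j)ᶜ) := measure_mono hincl
        _ ≤ ∑' i : Fin n, μ n (⋃ k : Fin 3,
            ⋂ j ∈ grp3 (p n) hP0 k.val, (reprEvent (x n) i j)ᶜ) := measure_iUnion_le _
        _ ≤ ∑' i : Fin n, ∑' k : Fin 3, μ n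
            (⋂ j ∈ grp3 (p n) hP0 k.val, (reprEvent (x n) i j)ᶜ) :=
              ENNReal.tsum_le_tsum (fun i => measure_iUnion_le _)
        _ = ∑' (_ : Fin n), ∑' (_ : Fin 3), ENNReal.ofReal ((1-r)^(p n / 3)) := by
              refine tsum_congr (fun i => tsum_congr (fun k => ?_))
              exact hgrp i k.val k.isLt
        _ = (n : ENNReal) * (3 * ENNReal.ofReal ((1-r)^(p n / 3))) := by
              simp only [tsum_fintype, Finset.sum_const, Finset.card_univ, Fintype.card_fin,
                nsmul_eq_mul, Nat.cast_ofNat]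
        _ = ENNReal.ofReal ((n:ℝ) * (3 * (1-r)^(p n / 3))) := by
              rw [ENNReal.ofReal_mul (Nat.cast_nonneg n),
                ENNReal.ofReal_mul (by norm_num : (0:ℝ) ≤ 3), ENNReal.ofReal_natCast]
              norm_num
        _ ≤ ENNReal.ofReal (3 * Real.exp α / n) := ENNReal.ofReal_le_ofReal hreal
    -- conclude
    have h1 : (1:ENNReal) ≤ μ n {ω | ∀ i : Fin n, ∃ j₁ j₂ j₃ : Fin (p n),
          j₁ ≠ j₂ ∧ j₁ ≠ j₃ ∧ j₂ ≠ j₃ ∧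
          (∀ j ∈ ({j₁, j₂, j₃} : Set (Fin (p n))),
            x n j i ω ≠ 0 ∧ ∀ i' : Fin n, i' ≠ i → x n j i' ω = 0)}
        + μ n ({ω | ∀ i : Fin n, ∃ j₁ j₂ j₃ : Fin (p n),
          j₁ ≠ j₂ ∧ j₁ ≠ j₃ ∧ j₂ ≠ j₃ ∧
          (∀ j ∈ ({j₁, j₂, j₃} : Set (Fin (p n))),
            x n j i ω ≠ 0 ∧ ∀ i' : Fin n, i' ≠ i → x n j i' ω = 0)}ᶜ) := by
      have h := measure_union_le (μ := μ n)
        {ω | ∀ i : Fin n, ∃ j₁ j₂ j₃ : Fin (p n),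
          j₁ ≠ j₂ ∧ j₁ ≠ j₃ ∧ j₂ ≠ j₃ ∧
          (∀ j ∈ ({j₁, j₂, j₃} : Set (Fin (p n))),
            x n j i ω ≠ 0 ∧ ∀ i' : Fin n, i' ≠ i → x n j i' ω = 0)}
        ({ω | ∀ i : Fin n, ∃ j₁ j₂ j₃ : Fin (p n),
          j₁ ≠ j₂ ∧ j₁ ≠ j₃ ∧ j₂ ≠ j₃ ∧
          (∀ j ∈ ({j₁, j₂, j₃} : Set (Fin (p n))),
            x n j i ω ≠ 0 ∧ ∀ i' : Fin n, i' ≠ i → x n j i' ω = 0)}ᶜ)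
      rwa [Set.union_compl_self, measure_univ] at h
    refine tsub_le_iff_right.2 ?_
    exact h1.trans (add_le_add_right hbad _)
  -- final limit argument
  have hεt : Tendsto (fun n : ℕ => ENNReal.ofReal (3 * Real.exp α / n)) atTop (nhds 0) := by
    have h := ENNReal.tendsto_ofReal (tendsto_const_div_atTop_nhds_zero_nat (3 * Real.exp α))
    simpa using h
  have hlow : Tendsto (fun n : ℕ => 1 - ENNReal.ofReal (3 * Real.exp α / n)) atTop (nhds 1) := by
    have h := ENNReal.Tendsto.sub (tendsto_const_nhds (x := (1:ENNReal)) (f := atTop)) hεt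
      (Or.inl ENNReal.one_ne_top)
    simpa using h
  refine tendsto_of_tendsto_of_tendsto_of_le_of_le' hlow tendsto_const_nhds ?_ ?_
  · exact eventually_atTop.2 ⟨N₀, key⟩
  · refine Filter.Eventually.of_forall (fun n => ?_)
    haveI := hprob n
    exact prob_le_one
end

section
/- Let ξ₁, …, ξₙ be independent centered random variables each with variance at least 1 and fourth moment bounded by B. Then there exists ν ∈ (0,1) depending only on B such that for every unit vector a ∈ Sⁿ⁻¹, the sum S = Σ a_k ξ_k satisfies P(|S| < 1/2) ≤ ν. -/
open MeasureTheory ProbabilityTheory Finset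

variable {Ω : Type} [MeasurableSpace Ω] {μ : Measure Ω} [IsProbabilityMeasure μ]

lemma rv_pow_int {f : Ω → ℝ} (hf : Measurable f)
    (h4 : Integrable (fun ω => f ω ^ 4) μ) {j : ℕ} (hj : j ≤ 4) :
    Integrable (fun ω => f ω ^ j) μ := by
  refine Integrable.mono' ((integrable_const (1:ℝ)).add h4)
    (hf.pow_const j).aestronglyMeasurable ?_
  filter_upwards with ω
  have h1 : ‖f ω ^ j‖ = |f ω| ^ j := by rw [Real.norm_eq_abs, abs_pow]
  have h2 : f ω ^ 4 = |f ω| ^ 4 := by rw [← abs_pow, abs_of_nonneg (by positivity)]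
  rw [h1, Pi.add_apply, h2]
  rcases le_total (|f ω|) 1 with h | h
  · have h3 : |f ω| ^ j ≤ 1 := pow_le_one₀ (abs_nonneg _) h
    have h4 : (0:ℝ) ≤ |f ω| ^ 4 := by positivity
    linarith
  · have h3 : |f ω| ^ j ≤ |f ω| ^ 4 := pow_le_pow_right₀ h hj
    linarith

lemma rv_step {X T : Ω → ℝ} (hind : IndepFun X T μ)
    (hXi : ∀ j, j ≤ 4 → Integrable (fun ω => X ω ^ j) μ)
    (hTi : ∀ j, j ≤ 4 → Integrable (fun ω => T ω ^ j) μ)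
    (hX1 : ∫ ω, X ω ∂μ = 0) (hT1 : ∫ ω, T ω ∂μ = 0) :
    (∀ j, j ≤ 4 → Integrable (fun ω => (X ω + T ω) ^ j) μ) ∧
      ∫ ω, (X ω + T ω) ∂μ = 0 ∧
      ∫ ω, (X ω + T ω) ^ 2 ∂μ = (∫ ω, X ω ^ 2 ∂μ) + ∫ ω, T ω ^ 2 ∂μ ∧
      ∫ ω, (X ω + T ω) ^ 4 ∂μ
        = (∫ ω, X ω ^ 4 ∂μ) + 6 * (∫ ω, X ω ^ 2 ∂μ) * (∫ ω, T ω ^ 2 ∂μ)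
          + ∫ ω, T ω ^ 4 ∂μ := by
  have hip : ∀ p q : ℕ, IndepFun (fun ω => X ω ^ p) (fun ω => T ω ^ q) μ :=
    fun p q => hind.comp (measurable_id.pow_const p) (measurable_id.pow_const q)
  have hmul : ∀ p, p ≤ 4 → ∀ q, q ≤ 4 → Integrable (fun ω => X ω ^ p * T ω ^ q) μ :=
    fun p hp q hq => (hip p q).integrable_mul (hXi p hp) (hTi q hq)
  have hemul : ∀ p, p ≤ 4 → ∀ q, q ≤ 4 →
      ∫ ω, X ω ^ p * T ω ^ q ∂μ = (∫ ω, X ω ^ p ∂μ) * ∫ ω, T ω ^ q ∂μ :=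
    fun p hp q hq => (hip p q).integral_fun_mul_eq_mul_integral (hXi p hp).1 (hTi q hq).1
  have hX : Integrable X μ := by simpa using hXi 1 (by norm_num)
  have hT : Integrable T μ := by simpa using hTi 1 (by norm_num)
  have hXT : ∫ ω, X ω * T ω ∂μ = 0 := by
    have := hemul 1 (by norm_num) 1 (by norm_num)
    simp only [pow_one] at this
    rw [this, hX1, hT1]; ring
  have hX3T : ∫ ω, X ω ^ 3 * T ω ∂μ = 0 := by
    have := hemul 3 (by norm_num) 1 (by norm_num)
    simp only [pow_one] at this
    rw [this, hT1]; ring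
  have hXT3 : ∫ ω, X ω * T ω ^ 3 ∂μ = 0 := by
    have := hemul 1 (by norm_num) 3 (by norm_num)
    simp only [pow_one] at this
    rw [this, hX1]; ring
  have hmul11 : Integrable (fun ω => X ω * T ω) μ := by
    have := hmul 1 (by norm_num) 1 (by norm_num); simpa using this
  have hmul31 : Integrable (fun ω => X ω ^ 3 * T ω) μ := by
    have := hmul 3 (by norm_num) 1 (by norm_num); simpa using this
  have hmul13 : Integrable (fun ω => X ω * T ω ^ 3) μ := by
    have := hmul 1 (by norm_num) 3 (by norm_num); simpa using this
  have hmul22 : Integrable (fun ω => X ω ^ 2 * T ω ^ 2) μ :=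
    hmul 2 (by norm_num) 2 (by norm_num)
  refine ⟨?_, ?_, ?_, ?_⟩
  · intro j hj
    interval_cases j
    · simpa using integrable_const (1:ℝ)
    · simpa using (show Integrable (fun ω => X ω + T ω) μ from hX.add hT)
    · have e : (fun ω => (X ω + T ω) ^ 2)
          = fun ω => X ω ^ 2 + (2 * (X ω * T ω) + T ω ^ 2) := by funext ω; ring
      rw [e]
      exact (hXi 2 (by norm_num)).add ((hmul11.const_mul 2).add (hTi 2 (by norm_num)))
    · have e : (fun ω => (X ω + T ω) ^ 3)
          = fun ω => X ω ^ 3 + (3 * (X ω ^ 2 * T ω) + (3 * (X ω * T ω ^ 2) + T ω ^ 3)) := by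
        funext ω; ring
      rw [e]
      have h21 : Integrable (fun ω => X ω ^ 2 * T ω) μ := by
        simpa using hmul 2 (by norm_num) 1 (by norm_num)
      have h12 : Integrable (fun ω => X ω * T ω ^ 2) μ := by
        simpa using hmul 1 (by norm_num) 2 (by norm_num)
      exact (hXi 3 (by norm_num)).add ((h21.const_mul 3).add
        ((h12.const_mul 3).add (hTi 3 (by norm_num))))
    · have e : (fun ω => (X ω + T ω) ^ 4)
          = fun ω => X ω ^ 4 + (4 * (X ω ^ 3 * T ω) + (6 * (X ω ^ 2 * T ω ^ 2)
              + (4 * (X ω * T ω ^ 3) + T ω ^ 4))) := by funext ω; ring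
      rw [e]
      exact (hXi 4 (by norm_num)).add ((hmul31.const_mul 4).add
        ((hmul22.const_mul 6).add ((hmul13.const_mul 4).add (hTi 4 (by norm_num)))))
  · rw [integral_add hX hT, hX1, hT1]; ring
  · have e : (fun ω => (X ω + T ω) ^ 2)
        = fun ω => X ω ^ 2 + (2 * (X ω * T ω) + T ω ^ 2) := by funext ω; ring
    have i1 : Integrable (fun ω => 2 * (X ω * T ω) + T ω ^ 2) μ :=
      (hmul11.const_mul 2).add (hTi 2 (by norm_num))
    rw [e, integral_add (hXi 2 (by norm_num)) i1,
      integral_add (hmul11.const_mul 2) (hTi 2 (by norm_num)), integral_const_mul, hXT]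
    ring
  · have e : (fun ω => (X ω + T ω) ^ 4)
        = fun ω => X ω ^ 4 + (4 * (X ω ^ 3 * T ω) + (6 * (X ω ^ 2 * T ω ^ 2)
            + (4 * (X ω * T ω ^ 3) + T ω ^ 4))) := by funext ω; ring
    have h22 := hemul 2 (by norm_num) 2 (by norm_num)
    have i3 : Integrable (fun ω => 4 * (X ω * T ω ^ 3) + T ω ^ 4) μ :=
      (hmul13.const_mul 4).add (hTi 4 (by norm_num))
    have i2 : Integrable (fun ω => 6 * (X ω ^ 2 * T ω ^ 2) + (4 * (X ω * T ω ^ 3) + T ω ^ 4)) μ :=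
      (hmul22.const_mul 6).add i3
    have i1 : Integrable (fun ω => 4 * (X ω ^ 3 * T ω)
        + (6 * (X ω ^ 2 * T ω ^ 2) + (4 * (X ω * T ω ^ 3) + T ω ^ 4))) μ :=
      (hmul31.const_mul 4).add i2
    rw [e, integral_add (hXi 4 (by norm_num)) i1,
      integral_add (hmul31.const_mul 4) i2,
      integral_add (hmul22.const_mul 6) i3,
      integral_add (hmul13.const_mul 4) (hTi 4 (by norm_num)),
      integral_const_mul, integral_const_mul, integral_const_mul,
      hX3T, hXT3, h22]
    ring

lemma rv_sq_int_sq_le {f : Ω → ℝ} (hf : Measurable f)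
    (h4 : Integrable (fun ω => f ω ^ 4) μ) :
    (∫ ω, f ω ^ 2 ∂μ) ^ 2 ≤ ∫ ω, f ω ^ 4 ∂μ := by
  have hmem : MemLp (fun ω => f ω ^ 2) 2 μ := by
    refine (memLp_two_iff_integrable_sq (hf.pow_const 2).aestronglyMeasurable).2 ?_
    have e : (fun ω => (f ω ^ 2) ^ 2) = fun ω => f ω ^ 4 := by funext ω; ring
    rw [e]; exact h4
  have hv := variance_nonneg (fun ω => f ω ^ 2) μ
  rw [variance_eq_sub hmem] at hv
  have e1 : ((fun ω => f ω ^ 2) ^ 2 : Ω → ℝ) = fun ω => f ω ^ 4 := by funext ω; simp; ring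
  rw [e1] at hv
  simpa using hv

lemma rv_amgm (C x : ℝ) (h1 : 1 ≤ C) :
    x ^ 2 ≤ 1 / 4 + x ^ 4 / (12 * C) + 3 * C := by
  have h12 : (0:ℝ) < 12 * C := by linarith
  have key : x ^ 2 - 1 / 4 - 3 * C ≤ x ^ 4 / (12 * C) := by
    rw [le_div_iff₀ h12]; nlinarith [sq_nonneg (x ^ 2 - 6 * C)]
  linarith

lemma rv_small (C x : ℝ) (h1 : 1 ≤ C) (h : |x| < 1 / 2) :
    x ^ 2 ≤ 1 / 4 + x ^ 4 / (12 * C) := by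
  obtain ⟨hl, hr⟩ := abs_lt.mp h
  have h4 : (0:ℝ) ≤ x ^ 4 / (12 * C) := by positivity
  nlinarith

/-- Rudelson–Vershynin small-ball lemma: for independent centered random variables
with variances at least 1 and fourth moments bounded by B, there is ν ∈ (0,1)
depending only on B such that for every unit coefficient vector a,
P(|Σ a_k ξ_k| < 1/2) ≤ ν. -/
theorem stmt15 (B : ℝ) (hB : 0 < B) :
    ∃ ν : ℝ, ν ∈ Set.Ioo (0 : ℝ) 1 ∧
      ∀ (Ω : Type) (mΩ : MeasurableSpace Ω) (μ : Measure Ω)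
        (_ : IsProbabilityMeasure μ) (n : ℕ) (ξ : Fin n → Ω → ℝ)
        (_ : ∀ k, Measurable (ξ k))
        (_ : iIndepFun ξ μ)
        (_ : ∀ k, ∫ ω, ξ k ω ∂μ = 0)
        (_ : ∀ k, 1 ≤ ∫ ω, (ξ k ω) ^ 2 ∂μ)
        (_ : ∀ k, ∫ ω, (ξ k ω) ^ 4 ∂μ ≤ B)
        (_ : ∀ k, Integrable (fun ω => (ξ k ω) ^ 4) μ)
        (a : Fin n → ℝ) (_ : ∑ k, (a k) ^ 2 = 1),
        (μ {ω | |∑ k, a k * ξ k ω| < 1 / 2}).toReal ≤ ν := by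
  classical
  set B' : ℝ := max B 1 with hB'def
  have hB'1 : (1 : ℝ) ≤ B' := le_max_right _ _
  have hB'0 : (0 : ℝ) < B' := by linarith
  refine ⟨1 - 1 / (6 * B'), ⟨by
      have h6 : (6 : ℝ) ≤ 6 * B' := by linarith
      have : 1 / (6 * B') ≤ 1 / 6 := by
        apply one_div_le_one_div_of_le <;> linarith
      linarith, by
      have : 0 < 1 / (6 * B') := by positivity
      linarith⟩, ?_⟩
  intro Ω mΩ μ hμ n ξ hmeas hindep hmean hvar hfour hint4 a ha
  set sB : ℝ := Real.sqrt B' with hsBdef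
  have hsB1 : (1 : ℝ) ≤ sB := by
    rw [hsBdef, show (1:ℝ) = Real.sqrt 1 by simp]
    exact Real.sqrt_le_sqrt hB'1
  have hsBsq : sB ^ 2 = B' := Real.sq_sqrt (by linarith)
  -- second moment bounds
  have hm2le : ∀ k, (∫ ω, ξ k ω ^ 2 ∂μ) ≤ sB := by
    intro k
    have h1 : (∫ ω, ξ k ω ^ 2 ∂μ) ^ 2 ≤ B' := by
      have := rv_sq_int_sq_le (μ := μ) (hmeas k) (hint4 k)
      have h2 := hfour k
      have : (∫ ω, ξ k ω ^ 2 ∂μ) ^ 2 ≤ B := le_trans this h2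
      exact le_trans this (le_max_left _ _)
    have h0 : (0 : ℝ) ≤ ∫ ω, ξ k ω ^ 2 ∂μ := le_trans zero_le_one (hvar k)
    nlinarith [hsBsq, hsB1]
  have hintpow : ∀ k, ∀ j, j ≤ 4 → Integrable (fun ω => ξ k ω ^ j) μ :=
    fun k j hj => rv_pow_int (hmeas k) (hint4 k) hj
  -- the scaled family
  have hsummeas : ∀ s : Finset (Fin n), Measurable (fun ω => ∑ k ∈ s, a k * ξ k ω) := by
    intro s
    exact Finset.measurable_sum s fun k _ => (hmeas k).const_mul _
  -- main induction
  have main : ∀ s : Finset (Fin n),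
      (∀ j, j ≤ 4 → Integrable (fun ω => (∑ k ∈ s, a k * ξ k ω) ^ j) μ) ∧
      (∫ ω, (∑ k ∈ s, a k * ξ k ω) ∂μ = 0) ∧
      ((∫ ω, (∑ k ∈ s, a k * ξ k ω) ^ 2 ∂μ) = ∑ k ∈ s, a k ^ 2 * ∫ ω, ξ k ω ^ 2 ∂μ) ∧
      (∫ ω, (∑ k ∈ s, a k * ξ k ω) ^ 4 ∂μ ≤ 3 * B' * (∑ k ∈ s, a k ^ 2) ^ 2) := by
    intro s
    induction s using Finset.cons_induction with
    | empty =>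
      refine ⟨?_, by simp, by simp, by simp⟩
      intro j hj
      rcases Nat.eq_zero_or_pos j with h | h
      · subst h; simpa using integrable_const (1 : ℝ)
      · have e : (fun ω : Ω => (∑ k ∈ (∅ : Finset (Fin n)), a k * ξ k ω) ^ j)
            = fun _ => (0 : ℝ) := by
          funext ω; simp [zero_pow h.ne']
        rw [e]; exact integrable_const 0
    | cons i s hi ih =>
      obtain ⟨ihint, ih1, ih2, ih4⟩ := ih
      have hXi : ∀ j, j ≤ 4 → Integrable (fun ω => (a i * ξ i ω) ^ j) μ := by
        intro j hj
        have e : (fun ω => (a i * ξ i ω) ^ j) = fun ω => a i ^ j * ξ i ω ^ j := by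
          funext ω; rw [mul_pow]
        rw [e]; exact (hintpow i j hj).const_mul _
      have hX1 : ∫ ω, a i * ξ i ω ∂μ = 0 := by
        rw [integral_const_mul, hmean i, mul_zero]
      have hindXT : IndepFun (fun ω => a i * ξ i ω) (fun ω => ∑ k ∈ s, a k * ξ k ω) μ := by
        have hc := hindep.comp (fun k => fun x : ℝ => a k * x)
          (fun k => measurable_const_mul _)
        have h := hc.indepFun_finsetSum_of_notMem
          (fun k => (hmeas k).const_mul _) hi
        have e : (∑ j ∈ s, ((fun k => (fun x : ℝ => a k * x) ∘ ξ k) j))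
            = fun ω => ∑ k ∈ s, a k * ξ k ω := by
          funext ω; simp [Finset.sum_apply, Function.comp]
        rw [e] at h
        exact h.symm
      obtain ⟨jint, j1, j2, j4⟩ :=
        rv_step hindXT hXi ihint hX1 ih1
      have esum : ∀ j : ℕ, (fun ω => (∑ k ∈ Finset.cons i s hi, a k * ξ k ω) ^ j)
          = fun ω => (a i * ξ i ω + ∑ k ∈ s, a k * ξ k ω) ^ j := by
        intro j; funext ω; rw [Finset.sum_cons]
      have hX2 : ∫ ω, (a i * ξ i ω) ^ 2 ∂μ = a i ^ 2 * ∫ ω, ξ i ω ^ 2 ∂μ := by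
        have e : (fun ω => (a i * ξ i ω) ^ 2) = fun ω => a i ^ 2 * ξ i ω ^ 2 := by
          funext ω; ring
        rw [e, integral_const_mul]
      have hX4 : ∫ ω, (a i * ξ i ω) ^ 4 ∂μ = a i ^ 4 * ∫ ω, ξ i ω ^ 4 ∂μ := by
        have e : (fun ω => (a i * ξ i ω) ^ 4) = fun ω => a i ^ 4 * ξ i ω ^ 4 := by
          funext ω; ring
        rw [e, integral_const_mul]
      refine ⟨?_, ?_, ?_, ?_⟩
      · intro j hj; rw [esum j]; exact jint j hj
      · rw [show (fun ω => (∑ k ∈ Finset.cons i s hi, a k * ξ k ω))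
            = fun ω => a i * ξ i ω + ∑ k ∈ s, a k * ξ k ω by
            funext ω; rw [Finset.sum_cons]]
        exact j1
      · rw [esum 2, j2, hX2, ih2, Finset.sum_cons]
      · rw [esum 4, j4, Finset.sum_cons]
        have hT2le : (∫ ω, (∑ k ∈ s, a k * ξ k ω) ^ 2 ∂μ) ≤ sB * ∑ k ∈ s, a k ^ 2 := by
          rw [ih2]
          calc (∑ k ∈ s, a k ^ 2 * ∫ ω, ξ k ω ^ 2 ∂μ) ≤ ∑ k ∈ s, a k ^ 2 * sB := by
                refine Finset.sum_le_sum fun k _ => ?_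
                exact mul_le_mul_of_nonneg_left (hm2le k) (sq_nonneg _)
            _ = sB * ∑ k ∈ s, a k ^ 2 := by rw [← Finset.sum_mul]; ring
        have hT2ge : (0:ℝ) ≤ ∫ ω, (∑ k ∈ s, a k * ξ k ω) ^ 2 ∂μ := by
          rw [ih2]
          refine Finset.sum_nonneg fun k _ => ?_
          have := hvar k
          nlinarith [sq_nonneg (a k)]
        have hX2le : ∫ ω, (a i * ξ i ω) ^ 2 ∂μ ≤ a i ^ 2 * sB := by
          rw [hX2]
          exact mul_le_mul_of_nonneg_left (hm2le i) (sq_nonneg _)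
        have hX2ge : (0:ℝ) ≤ ∫ ω, (a i * ξ i ω) ^ 2 ∂μ := by
          rw [hX2]; have := hvar i; nlinarith [sq_nonneg (a i)]
        have hX4le : ∫ ω, (a i * ξ i ω) ^ 4 ∂μ ≤ a i ^ 4 * B' := by
          rw [hX4]
          have h1 : ∫ ω, ξ i ω ^ 4 ∂μ ≤ B' := le_trans (hfour i) (le_max_left _ _)
          exact mul_le_mul_of_nonneg_left h1 (by positivity)
        have ht0 : (0:ℝ) ≤ ∑ k ∈ s, a k ^ 2 := Finset.sum_nonneg fun k _ => sq_nonneg _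
        have hprod : (∫ ω, (a i * ξ i ω) ^ 2 ∂μ) * ∫ ω, (∑ k ∈ s, a k * ξ k ω) ^ 2 ∂μ
            ≤ (a i ^ 2 * sB) * (sB * ∑ k ∈ s, a k ^ 2) :=
          mul_le_mul hX2le hT2le hT2ge (by positivity)
        nlinarith [sq_nonneg (a i), sq_nonneg (a i ^ 2 - ∑ k ∈ s, a k ^ 2)]
  obtain ⟨Sint, S1, S2, S4⟩ := main Finset.univ
  have hSmeas : Measurable (fun ω => ∑ k, a k * ξ k ω) := hsummeas Finset.univ
  have h12 : (0:ℝ) < 12 * B' := by linarith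
  have hS2ge : (1:ℝ) ≤ ∫ ω, (∑ k, a k * ξ k ω) ^ 2 ∂μ := by
    rw [S2]
    calc (1:ℝ) = ∑ k, a k ^ 2 := ha.symm
      _ ≤ ∑ k, a k ^ 2 * ∫ ω, ξ k ω ^ 2 ∂μ :=
          Finset.sum_le_sum fun k _ => le_mul_of_one_le_right (sq_nonneg _) (hvar k)
  have hS4 : ∫ ω, (∑ k, a k * ξ k ω) ^ 4 ∂μ ≤ 3 * B' := by
    have := S4; rw [ha] at this; simpa using this
  set A : Set Ω := {ω | 1 / 2 ≤ |∑ k, a k * ξ k ω|} with hAdef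
  have hA : MeasurableSet A := measurableSet_le measurable_const hSmeas.abs
  have hpt : ∀ ω, (∑ k, a k * ξ k ω) ^ 2
      ≤ 1 / 4 + (∑ k, a k * ξ k ω) ^ 4 / (12 * B') + A.indicator (fun _ => 3 * B') ω := by
    intro ω
    by_cases h : ω ∈ A
    · rw [Set.indicator_of_mem h]
      exact rv_amgm B' _ hB'1
    · rw [Set.indicator_of_notMem h]
      have h' : |∑ k, a k * ξ k ω| < 1 / 2 := by
        have := h; rw [hAdef] at this; simpa [not_le] using this
      have := rv_small B' _ hB'1 h'
      linarith
  have hi4 : Integrable (fun ω => (∑ k, a k * ξ k ω) ^ 4 / (12 * B')) μ :=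
    (Sint 4 le_rfl).div_const _
  have hiInd : Integrable (fun ω => A.indicator (fun _ => 3 * B') ω) μ :=
    (integrable_const (3 * B')).indicator hA
  have hi14 : Integrable (fun ω => 1 / 4 + (∑ k, a k * ξ k ω) ^ 4 / (12 * B')) μ :=
    (integrable_const _).add hi4
  have hiRHS : Integrable (fun ω => 1 / 4 + (∑ k, a k * ξ k ω) ^ 4 / (12 * B')
      + A.indicator (fun _ => 3 * B') ω) μ := hi14.add hiInd
  have hmono := integral_mono (Sint 2 (by norm_num)) hiRHS hpt
  rw [integral_add hi14 hiInd,
    integral_add (integrable_const ((1:ℝ) / 4)) hi4, integral_const, integral_div,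
    integral_indicator_const _ hA] at hmono
  have hS4d : (∫ ω, (∑ k, a k * ξ k ω) ^ 4 ∂μ) / (12 * B') ≤ 1 / 4 := by
    rw [div_le_iff₀ h12]; linarith
  have hp : 1 / (6 * B') ≤ (μ A).toReal := by
    rw [div_le_iff₀ (by linarith : (0:ℝ) < 6 * B')]
    have hμ0 : (0:ℝ) ≤ (μ A).toReal := ENNReal.toReal_nonneg
    simp only [Measure.real, measure_univ, ENNReal.toReal_one, smul_eq_mul] at hmono
    nlinarith
  have hcompl : {ω | |∑ k, a k * ξ k ω| < 1 / 2} = Aᶜ := by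
    ext ω; simp [hAdef, not_le]
  rw [hcompl, prob_compl_eq_one_sub hA,
    ENNReal.toReal_sub_of_le prob_le_one (by simp), ENNReal.toReal_one]
  have h6 : (0:ℝ) < 6 * B' := by linarith
  linarith
end
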